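/- (Lemma 1.) Fix a segmentation R : P → Fin m and ε_ν ∈ (0,1). Then almost surely, sup over all admissible pairs (ν_d, ν_u) and all μ ∈ Θ(R) of | (1/n)·Σ_{t=⌊n·ν_d⌋+1}^{⌊n·ν_u⌋} l((R,μ); X_t) − (ν_u − ν_d)·L(R,μ) | → 0 as n → ∞; and the same almost-sure uniform convergence holds with l and L replaced by their gradients in μ, and with l and L replaced by their Hessians in μ. -/

import Mathlib

open MeasureTheory ProbabilityTheory Filter Topology

/-- The reduced Poisson log-likelihood of a count array `x` under segmentation `R`
and rates `μ`: `l((R,μ); x) = Σ_w Σ_i (x(i,w)·log μ(R i, w) − μ(R i, w))`. -/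
noncomputable def loglik {NI NW m : ℕ} (R : Fin NI → Fin m)
    (μ : Fin m × Fin NW → ℝ) (x : Fin NI × Fin NW → ℕ) : ℝ :=
  ∑ w : Fin NW, ∑ i : Fin NI, ((x (i, w) : ℝ) * Real.log (μ (R i, w)) - μ (R i, w))

/-- Gradient of `l((R,μ); x)` in `μ`: its `(h,w)` entry is
`Σ_{i : R i = h} (x(i,w)/μ(h,w) − 1)`. -/
noncomputable def loglikGrad {NI NW m : ℕ} (R : Fin NI → Fin m)
    (μ : Fin m × Fin NW → ℝ) (x : Fin NI × Fin NW → ℕ) :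
    Fin m × Fin NW → ℝ :=
  fun hw => ∑ i : Fin NI,
    if R i = hw.1 then ((x (i, hw.2) : ℝ) / μ hw - 1) else 0

/-- Diagonal of the Hessian of `l((R,μ); x)` in `μ`: its `(h,w)` entry is
`−Σ_{i : R i = h} x(i,w)/μ(h,w)²`. -/
noncomputable def loglikHess {NI NW m : ℕ} (R : Fin NI → Fin m)
    (μ : Fin m × Fin NW → ℝ) (x : Fin NI × Fin NW → ℕ) :
    Fin m × Fin NW → ℝ :=
  fun hw => -∑ i : Fin NI,
    if R i = hw.1 then (x (i, hw.2) : ℝ) / (μ hw) ^ 2 else 0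

/-- The expected log-likelihood `L(R,μ)` when the true per-pixel rates are
`λ°(i,w) = μ°(R° i, w)`. -/
noncomputable def expLoglik {NI NW m0 m : ℕ} (R0 : Fin NI → Fin m0)
    (μ0 : Fin m0 × Fin NW → ℝ) (R : Fin NI → Fin m) (μ : Fin m × Fin NW → ℝ) : ℝ :=
  ∑ w : Fin NW, ∑ i : Fin NI, (μ0 (R0 i, w) * Real.log (μ (R i, w)) - μ (R i, w))

/-- Gradient of `L(R,μ)` in `μ`. -/
noncomputable def expLoglikGrad {NI NW m0 m : ℕ} (R0 : Fin NI → Fin m0)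
    (μ0 : Fin m0 × Fin NW → ℝ) (R : Fin NI → Fin m) (μ : Fin m × Fin NW → ℝ) :
    Fin m × Fin NW → ℝ :=
  fun hw => ∑ i : Fin NI,
    if R i = hw.1 then (μ0 (R0 i, hw.2) / μ hw - 1) else 0

/-- Diagonal of the Hessian of `L(R,μ)` in `μ`. -/
noncomputable def expLoglikHess {NI NW m0 m : ℕ} (R0 : Fin NI → Fin m0)
    (μ0 : Fin m0 × Fin NW → ℝ) (R : Fin NI → Fin m) (μ : Fin m × Fin NW → ℝ) :
    Fin m × Fin NW → ℝ :=
  fun hw => -∑ i : Fin NI,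
    if R i = hw.1 then μ0 (R0 i, hw.2) / (μ hw) ^ 2 else 0

/-- The compact parameter box `Θ(R) = [C_d, C_u]^(Fin m × Fin N_W)`. -/
def Theta (Cd Cu : ℝ) (m NW : ℕ) : Set (Fin m × Fin NW → ℝ) :=
  {μ | ∀ p, μ p ∈ Set.Icc Cd Cu}

/-- An admissible pair of normalized endpoints: `0 ≤ ν_d < ν_u ≤ 1` with
`ν_u − ν_d > ε_ν`. -/
def AdmPair (epsnu : ℝ) : Type :=
  {q : ℝ × ℝ // 0 ≤ q.1 ∧ q.1 < q.2 ∧ q.2 ≤ 1 ∧ epsnu < q.2 - q.1}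

/-! For each pixel–band coordinate `p` the counts `X_t(p)` are i.i.d. Poisson with mean `λ°(p)`,
so by Etemadi's strong law the partial sums satisfy `S_k(p) = k·λ°(p) + o(k)` almost surely.
An `o(k)` error is `o(n)` uniformly over `k ≤ n`, and a window sum over
`⌊n ν_d⌋ < t ≤ ⌊n ν_u⌋` is a difference of two partial sums, so that sum divided by `n` tends to
`(ν_u − ν_d)·λ°(p)` uniformly in `0 ≤ ν_d ≤ ν_u ≤ 1`; the same holds for the window length.
The log-likelihood, its gradient and its Hessian are affine in the counts, with coefficients
`log μ`, `μ`, `1/μ` and `1/μ²` that are bounded on `Θ(R)` because `μ ≥ C_d > 0`. Each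
discrepancy is therefore at most a constant times the total window deviation, uniformly in `μ`. -/

open Finset
open scoped NNReal Nat

theorem hasSum_poisson_mul_natCast (r : ℝ≥0) :
    HasSum (fun n : ℕ => Real.exp (-r) * r ^ n / n ! * n) r := by
  have hshift (n : ℕ) : Real.exp (-r) * r ^ (n + 1) / ((n + 1)! : ℕ) * ((n : ℝ) + 1)
      = r * (Real.exp (-r) * r ^ n / n !) := by
    rw [Nat.factorial_succ]
    push_cast
    field_simp
    ring
  rw [← hasSum_nat_add_iff' 1]
  simp only [Nat.cast_add, Nat.cast_one, hshift]
  simpa using (hasSum_one_poissonMeasure r).mul_left (r : ℝ)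

theorem integrable_natCast_poissonMeasure (r : ℝ≥0) :
    Integrable (fun n : ℕ => (n : ℝ)) (poissonMeasure r) :=
  integrable_poissonMeasure_iff.2 <| by
    simpa using (hasSum_poisson_mul_natCast r).summable

theorem integral_natCast_poissonMeasure (r : ℝ≥0) :
    ∫ n, (n : ℝ) ∂poissonMeasure r = r :=
  (hasSum_integral_poissonMeasure (integrable_natCast_poissonMeasure r)).unique <| by
    simpa using hasSum_poisson_mul_natCast r

theorem ae_tendsto_average_of_poisson {Ω : Type*} [MeasurableSpace Ω] {P : Measure Ω}
    {Y : ℕ → Ω → ℕ} (hmeas : ∀ t, Measurable (Y t))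
    (hindep : Pairwise fun i j => IndepFun (Y i) (Y j) P) {r : ℝ≥0}
    (hlaw : ∀ t, P.map (Y t) = poissonMeasure r) :
    ∀ᵐ ω ∂P, Tendsto (fun n : ℕ => (∑ t ∈ range n, (Y t ω : ℝ)) / n) atTop (𝓝 r) := by
  have hcast : Measurable (fun k : ℕ => (k : ℝ)) := measurable_from_top
  have hint : Integrable (fun ω => (Y 0 ω : ℝ)) P :=
    (integrable_map_measure hcast.aestronglyMeasurable (hmeas 0).aemeasurable).1 <| by
      rw [hlaw 0]
      exact integrable_natCast_poissonMeasure r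
  have hmean : ∫ ω, (Y 0 ω : ℝ) ∂P = r := by
    rw [← integral_map (hmeas 0).aemeasurable hcast.aestronglyMeasurable, hlaw 0,
      integral_natCast_poissonMeasure]
  have hident (t : ℕ) : IdentDistrib (Y t) (Y 0) P P :=
    ⟨(hmeas t).aemeasurable, (hmeas 0).aemeasurable, by rw [hlaw t, hlaw 0]⟩
  simpa [hmean] using strong_law_ae_real (fun t ω => (Y t ω : ℝ)) hint
    (fun i j hij => (hindep hij).comp hcast hcast) (fun t => (hident t).comp hcast)

theorem tendstoUniformlyOn_finset_sum {α β γ ι : Type*} [UniformSpace β] [AddCommGroup β]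
    [IsUniformAddGroup β] {F : ι → γ → α → β} {f : ι → α → β} {l : Filter γ} {S : Set α}
    (s : Finset ι) (h : ∀ i ∈ s, TendstoUniformlyOn (F i) (f i) l S) :
    TendstoUniformlyOn (fun n x => ∑ i ∈ s, F i n x) (fun x => ∑ i ∈ s, f i x) l S := by
  classical
  induction s using Finset.induction_on with
  | empty => simpa using tendsto_const_nhds.tendstoUniformlyOn_const S
  | insert i s hi ih =>
    simp only [sum_insert hi]
    exact (h i (mem_insert_self i s)).add (ih fun j hj => h j (mem_insert_of_mem hj))

theorem eventually_forall_le_abs_le_of_isLittleO {u : ℕ → ℝ}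
    (hu : u =o[atTop] (fun n : ℕ => (n : ℝ))) {ε : ℝ} (hε : 0 < ε) :
    ∀ᶠ n in atTop, ∀ k ≤ n, |u k| ≤ ε * n := by
  obtain ⟨K, hK⟩ := eventually_atTop.1 (hu.bound hε)
  filter_upwards [(tendsto_natCast_atTop_atTop.const_mul_atTop hε).eventually_ge_atTop
    (∑ k ∈ range K, |u k|)] with n hn k hkn
  rcases lt_or_ge k K with hk | hk
  · exact (single_le_sum (fun j _ => abs_nonneg (u j)) (mem_range.2 hk)).trans hn
  · calc |u k| ≤ ε * k := by simpa using hK k hk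
      _ ≤ ε * n := by gcongr

theorem abs_floor_sub_floor_div_sub_le {n : ℕ} (hn : 0 < n) {a b : ℝ} (ha : 0 ≤ a)
    (hab : a ≤ b) :
    |((⌊n * b⌋₊ : ℝ) - ⌊n * a⌋₊) / n - (b - a)| ≤ 1 / n := by
  have hn' : (0 : ℝ) < n := by exact_mod_cast hn
  have hb : 0 ≤ b := ha.trans hab
  have hA := Nat.floor_le (mul_nonneg hn'.le ha)
  have hA' := Nat.lt_floor_add_one ((n : ℝ) * a)
  have hB := Nat.floor_le (mul_nonneg hn'.le hb)
  have hB' := Nat.lt_floor_add_one ((n : ℝ) * b)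
  rw [show ((⌊n * b⌋₊ : ℝ) - ⌊n * a⌋₊) / n - (b - a)
      = ((⌊n * b⌋₊ : ℝ) - ⌊n * a⌋₊ - n * (b - a)) / n by field_simp,
    abs_div, abs_of_pos (by positivity : (0 : ℝ) < n)]
  gcongr
  rw [abs_le]
  constructor <;> linarith

theorem abs_window_average_sub_le (f : ℕ → ℝ) (c : ℝ) {n : ℕ} (hn : 0 < n) {q : ℝ × ℝ}
    (hq1 : 0 ≤ q.1) (hq12 : q.1 ≤ q.2) (hq2 : q.2 ≤ 1) {M : ℝ}
    (hM : ∀ k ≤ n + 1, |∑ t ∈ range k, f t - k * c| ≤ M) :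
    |(1 / (n : ℝ)) * ∑ t ∈ Ioc ⌊n * q.1⌋₊ ⌊n * q.2⌋₊, f t - (q.2 - q.1) * c|
      ≤ (2 * M + |c|) / n := by
  set u : ℕ → ℝ := fun k => ∑ t ∈ range k, f t - k * c
  have hn' : (0 : ℝ) < n := by exact_mod_cast hn
  set A := ⌊n * q.1⌋₊
  set B := ⌊n * q.2⌋₊
  have hAB : A ≤ B := Nat.floor_le_floor (by gcongr)
  have hBn : B ≤ n := Nat.floor_le_of_le (by nlinarith)
  have hsum : ∑ t ∈ Ioc A B, f t = u (B + 1) - u (A + 1) + (B - A) * c := by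
    rw [← Finset.Ico_add_one_add_one_eq_Ioc, sum_Ico_eq_sub _ (by omega)]
    push_cast [u]
    ring
  have hdev : (1 / (n : ℝ)) * ∑ t ∈ Ioc A B, f t - (q.2 - q.1) * c
      = (u (B + 1) - u (A + 1)) / n + c * (((B : ℝ) - A) / n - (q.2 - q.1)) := by
    rw [hsum]
    field_simp
    ring
  have huB : |u (B + 1)| ≤ M := by simpa [u] using hM (B + 1) (by omega)
  have huA : |u (A + 1)| ≤ M := by simpa [u] using hM (A + 1) (by omega)
  rw [hdev, add_div]
  refine (abs_add_le _ _).trans (add_le_add ?_ ?_)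
  · rw [abs_div, abs_of_pos hn']
    gcongr
    linarith [abs_sub (u (B + 1)) (u (A + 1))]
  · rw [abs_mul]
    exact (mul_le_mul_of_nonneg_left (abs_floor_sub_floor_div_sub_le hn hq1 hq12)
      (abs_nonneg c)).trans_eq (mul_one_div _ _)

theorem tendstoUniformlyOn_abs_window_average_sub {f : ℕ → ℝ} {c : ℝ}
    (hf : Tendsto (fun n : ℕ => (∑ t ∈ range n, f t) / n) atTop (𝓝 c)) :
    TendstoUniformlyOn (fun (n : ℕ) (q : ℝ × ℝ) =>
        |(1 / (n : ℝ)) * ∑ t ∈ Ioc ⌊n * q.1⌋₊ ⌊n * q.2⌋₊, f t - (q.2 - q.1) * c|) 0 atTop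
      {q | 0 ≤ q.1 ∧ q.1 ≤ q.2 ∧ q.2 ≤ 1} := by
  have hu : (fun k : ℕ => ∑ t ∈ range k, f t - k * c) =o[atTop] (fun n : ℕ => (n : ℝ)) := by
    refine (Asymptotics.isLittleO_iff_tendsto' ?_).2 ?_
    · filter_upwards [eventually_ne_atTop 0] with n hn h
      exact absurd h (Nat.cast_ne_zero.2 hn)
    · rw [← sub_self c]
      refine hf.sub_const c |>.congr' ?_
      filter_upwards [eventually_ne_atTop 0] with n hn
      field_simp
  rw [Metric.tendstoUniformlyOn_iff]
  intro ε hε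
  filter_upwards [(tendsto_add_atTop_nat 1).eventually
      (eventually_forall_le_abs_le_of_isLittleO hu (by positivity : 0 < ε / 8)),
    tendsto_natCast_atTop_atTop.eventually_gt_atTop (2 * |c| / ε),
    eventually_gt_atTop 0] with n hM hcn hn q ⟨hq1, hq12, hq2⟩
  have hn' : (1 : ℝ) ≤ n := by exact_mod_cast hn
  rw [div_lt_iff₀ hε] at hcn
  rw [Pi.zero_apply, dist_zero_left, Real.norm_eq_abs, abs_abs]
  refine (abs_window_average_sub_le f c hn hq1 hq12 hq2 hM).trans_lt ?_
  rw [div_lt_iff₀ (by positivity)]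
  push_cast
  nlinarith

/-- Used with `c = 1 / n`, `a = ν_u − ν_d` and `s` the window `⌊n ν_d⌋ < t ≤ ⌊n ν_u⌋`. -/
def windowDeviation {ι : Type*} [Fintype ι] (c a : ℝ) (s : Finset ℕ) (x : ℕ → ι → ℕ)
    (ρ : ι → ℝ) : ℝ :=
  ∑ p, (|c * ∑ t ∈ s, (x t p : ℝ) - a * ρ p| + |c * #s - a|)

theorem windowDeviation_nonneg {ι : Type*} [Fintype ι] (c a : ℝ) (s : Finset ℕ)
    (x : ℕ → ι → ℕ) (ρ : ι → ℝ) : 0 ≤ windowDeviation c a s x ρ :=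
  sum_nonneg fun _ _ => by positivity

theorem tendsto_iSup_iSup_of_le_mul {ι κ : Type*} {e : ℕ → ι → ℝ}
    (he : TendstoUniformly e 0 atTop) {f : ℕ → ι → κ → ℝ} (K : ℝ)
    (hf0 : ∀ n i k, 0 ≤ f n i k) (hfe : ∀ n i k, f n i k ≤ K * e n i) :
    Tendsto (fun n => ⨆ i, ⨆ k, f n i k) atTop (𝓝 0) := by
  rw [Metric.tendstoUniformly_iff] at he
  rw [NormedAddGroup.tendsto_nhds_zero]
  intro ε hε
  have hη : 0 < ε / (|K| + 1) := by positivity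
  filter_upwards [he _ hη] with n hn
  have hb : ∀ i k, f n i k ≤ |K| * (ε / (|K| + 1)) := fun i k => by
    have hei : |e n i| < ε / (|K| + 1) := by simpa using hn i
    calc f n i k ≤ K * e n i := hfe n i k
      _ ≤ |K| * |e n i| := (le_abs_self _).trans (abs_mul _ _).le
      _ ≤ |K| * (ε / (|K| + 1)) := by gcongr
  have hb0 : 0 ≤ |K| * (ε / (|K| + 1)) := by positivity
  rw [Real.norm_of_nonneg (Real.iSup_nonneg fun i => Real.iSup_nonneg fun k => hf0 n i k)]
  calc ⨆ i, ⨆ k, f n i k ≤ |K| * (ε / (|K| + 1)) :=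
        Real.iSup_le (fun i => Real.iSup_le (hb i) hb0) hb0
    _ < ε := by
        rw [mul_div_assoc', div_lt_iff₀ (by positivity)]
        linarith

theorem tendstoUniformlyOn_windowDeviation {ι : Type*} [Fintype ι] {x : ℕ → ι → ℕ}
    {ρ : ι → ℝ}
    (hx : ∀ p, Tendsto (fun n : ℕ => (∑ t ∈ range n, (x t p : ℝ)) / n) atTop (𝓝 (ρ p))) :
    TendstoUniformlyOn (fun (n : ℕ) (q : ℝ × ℝ) =>
        windowDeviation (1 / n) (q.2 - q.1) (Ioc ⌊n * q.1⌋₊ ⌊n * q.2⌋₊) x ρ) 0 atTop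
      {q | 0 ≤ q.1 ∧ q.1 ≤ q.2 ∧ q.2 ≤ 1} := by
  have hcount : Tendsto (fun n : ℕ => (∑ _t ∈ range n, (1 : ℝ)) / n) atTop (𝓝 1) := by
    refine tendsto_const_nhds.congr' ?_
    filter_upwards [eventually_ne_atTop 0] with n hn
    simp [hn]
  simpa [windowDeviation, Pi.zero_def] using tendstoUniformlyOn_finset_sum univ fun p _ =>
    (tendstoUniformlyOn_abs_window_average_sub (hx p)).add
      (tendstoUniformlyOn_abs_window_average_sub hcount)

theorem abs_sum_ite_le {ι : Type*} [Fintype ι] (P : ι → Prop) [DecidablePred P]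
    (g : ι → ℝ) : |∑ i, if P i then g i else 0| ≤ ∑ i, |g i| := by
  rw [← sum_filter]
  exact (abs_sum_le_sum_abs _ _).trans
    (sum_le_sum_of_subset_of_nonneg (filter_subset _ _) fun _ _ _ => abs_nonneg _)

theorem sum_le_sum_prod_of_nonneg {α β : Type*} [Fintype α] [Fintype β] {g : α × β → ℝ}
    (hg : ∀ p, 0 ≤ g p) (b : β) : ∑ a, g (a, b) ≤ ∑ p, g p := by
  rw [Fintype.sum_prod_type_right]
  exact single_le_sum (f := fun b => ∑ a, g (a, b)) (fun b _ => sum_nonneg fun a _ => hg (a, b))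
    (mem_univ b)

theorem abs_mul_sub_mul_le {D δ α β K : ℝ} (hα : |α| ≤ K) (hβ : |β| ≤ K) :
    |D * α - δ * β| ≤ K * (|D| + |δ|) :=
  calc |D * α - δ * β| ≤ |D| * |α| + |δ| * |β| := by
        rw [← abs_mul, ← abs_mul]
        exact abs_sub _ _
    _ ≤ |D| * K + |δ| * K := by gcongr
    _ = K * (|D| + |δ|) := by ring

section Likelihood

variable {NI NW m0 m : ℕ} (R0 : Fin NI → Fin m0) (μ0 : Fin m0 × Fin NW → ℝ)
  (R : Fin NI → Fin m) (c a : ℝ) (s : Finset ℕ) (x : ℕ → Fin NI × Fin NW → ℕ)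
  (μ : Fin m × Fin NW → ℝ)

theorem mul_sum_loglik_sub_mul_expLoglik :
    c * ∑ t ∈ s, loglik R μ (x t) - a * expLoglik R0 μ0 R μ =
      ∑ w, ∑ i, ((c * ∑ t ∈ s, (x t (i, w) : ℝ) - a * μ0 (R0 i, w)) * Real.log (μ (R i, w))
        - (c * #s - a) * μ (R i, w)) := by
  have hterm (w : Fin NW) (i : Fin NI) :
      (c * ∑ t ∈ s, (x t (i, w) : ℝ) - a * μ0 (R0 i, w)) * Real.log (μ (R i, w))
        - (c * #s - a) * μ (R i, w)
      = c * ∑ t ∈ s, ((x t (i, w) : ℝ) * Real.log (μ (R i, w)) - μ (R i, w))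
        - a * (μ0 (R0 i, w) * Real.log (μ (R i, w)) - μ (R i, w)) := by
    rw [sum_sub_distrib, ← sum_mul, sum_const, nsmul_eq_mul]
    ring
  simp only [hterm, sum_sub_distrib, ← mul_sum, loglik, expLoglik]
  simp only [Finset.sum_comm (s := s)]

theorem smul_sum_loglikGrad_sub_smul_expLoglikGrad_apply (hw : Fin m × Fin NW) :
    (c • ∑ t ∈ s, loglikGrad R μ (x t) - a • expLoglikGrad R0 μ0 R μ) hw =
      ∑ i, if R i = hw.1 then
        (c * ∑ t ∈ s, (x t (i, hw.2) : ℝ) - a * μ0 (R0 i, hw.2)) / μ hw - (c * #s - a)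
      else 0 := by
  simp only [Pi.sub_apply, Pi.smul_apply, smul_eq_mul, Finset.sum_apply, loglikGrad, expLoglikGrad]
  rw [Finset.sum_comm, mul_sum, mul_sum, ← sum_sub_distrib]
  refine sum_congr rfl fun i _ => ?_
  split_ifs
  · rw [sum_sub_distrib, ← sum_div, sum_const, nsmul_eq_mul]
    ring
  · simp

theorem smul_sum_loglikHess_sub_smul_expLoglikHess_apply (hw : Fin m × Fin NW) :
    (c • ∑ t ∈ s, loglikHess R μ (x t) - a • expLoglikHess R0 μ0 R μ) hw =
      -∑ i, if R i = hw.1 then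
        (c * ∑ t ∈ s, (x t (i, hw.2) : ℝ) - a * μ0 (R0 i, hw.2)) / μ hw ^ 2
      else 0 := by
  simp only [Pi.sub_apply, Pi.smul_apply, smul_eq_mul, Finset.sum_apply, loglikHess, expLoglikHess,
    sum_neg_distrib]
  rw [Finset.sum_comm, mul_neg, mul_neg, mul_sum, mul_sum, ← neg_add', ← sub_eq_add_neg,
    ← sum_sub_distrib]
  congr 1
  refine sum_congr rfl fun i _ => ?_
  split_ifs
  · rw [← sum_div]
    ring
  · simp

variable {Cd Cu : ℝ} {R0 μ0 R c a s x μ}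

theorem abs_mul_sum_loglik_sub_le (hCd : 0 < Cd) (hμ : μ ∈ Theta Cd Cu m NW) :
    |c * ∑ t ∈ s, loglik R μ (x t) - a * expLoglik R0 μ0 R μ| ≤
      (|Real.log Cd| + |Real.log Cu| + Cu) *
        windowDeviation c a s x (fun p => μ0 (R0 p.1, p.2)) := by
  set K := |Real.log Cd| + |Real.log Cu| + Cu
  have hlog (p) : |Real.log (μ p)| ≤ K := by
    obtain ⟨h1, h2⟩ := hμ p
    have := abs_le_max_abs_abs (Real.log_le_log hCd h1) (Real.log_le_log (hCd.trans_le h1) h2)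
    have := max_le_add_of_nonneg (abs_nonneg (Real.log Cd)) (abs_nonneg (Real.log Cu))
    linarith [(hCd.trans_le h1).le.trans h2]
  have hμK (p) : |μ p| ≤ K := by
    obtain ⟨h1, h2⟩ := hμ p
    rw [abs_of_pos (hCd.trans_le h1)]
    linarith [abs_nonneg (Real.log Cd), abs_nonneg (Real.log Cu)]
  rw [mul_sum_loglik_sub_mul_expLoglik, windowDeviation, mul_sum, Fintype.sum_prod_type_right]
  refine (abs_sum_le_sum_abs _ _).trans (sum_le_sum fun w _ => ?_)
  refine (abs_sum_le_sum_abs _ _).trans (sum_le_sum fun i _ => ?_)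
  exact abs_mul_sub_mul_le (hlog _) (hμK _)

theorem norm_smul_sum_loglikGrad_sub_le (hCd : 0 < Cd) (hμ : μ ∈ Theta Cd Cu m NW) :
    ‖c • ∑ t ∈ s, loglikGrad R μ (x t) - a • expLoglikGrad R0 μ0 R μ‖ ≤
      (Cd⁻¹ + 1) * windowDeviation c a s x (fun p => μ0 (R0 p.1, p.2)) := by
  refine (pi_norm_le_iff_of_nonneg
    (mul_nonneg (by positivity) (windowDeviation_nonneg _ _ _ _ _))).2 fun hw => ?_
  have hinv : |(μ hw)⁻¹| ≤ Cd⁻¹ + 1 := by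
    rw [abs_inv, abs_of_pos (hCd.trans_le (hμ hw).1)]
    linarith [inv_anti₀ hCd (hμ hw).1]
  rw [Real.norm_eq_abs, smul_sum_loglikGrad_sub_smul_expLoglikGrad_apply, windowDeviation,
    mul_sum]
  refine (abs_sum_ite_le _ _).trans ?_
  refine le_trans ?_ (sum_le_sum_prod_of_nonneg (fun p => by positivity) hw.2)
  refine sum_le_sum fun i _ => ?_
  simpa [div_eq_mul_inv] using
    abs_mul_sub_mul_le (D := c * ∑ t ∈ s, (x t (i, hw.2) : ℝ) - a * μ0 (R0 i, hw.2))
      (δ := c * #s - a) (β := 1) hinv (by simp [hCd.le])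

theorem norm_smul_sum_loglikHess_sub_le (hCd : 0 < Cd) (hμ : μ ∈ Theta Cd Cu m NW) :
    ‖c • ∑ t ∈ s, loglikHess R μ (x t) - a • expLoglikHess R0 μ0 R μ‖ ≤
      (Cd ^ 2)⁻¹ * windowDeviation c a s x (fun p => μ0 (R0 p.1, p.2)) := by
  refine (pi_norm_le_iff_of_nonneg
    (mul_nonneg (by positivity) (windowDeviation_nonneg _ _ _ _ _))).2 fun hw => ?_
  have hinv : |(μ hw ^ 2)⁻¹| ≤ (Cd ^ 2)⁻¹ := by
    have hμpos := hCd.trans_le (hμ hw).1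
    rw [abs_inv, abs_of_pos (by positivity)]
    exact inv_anti₀ (by positivity) (pow_le_pow_left₀ hCd.le (hμ hw).1 2)
  rw [Real.norm_eq_abs, smul_sum_loglikHess_sub_smul_expLoglikHess_apply, abs_neg,
    windowDeviation, mul_sum]
  refine (abs_sum_ite_le _ _).trans ?_
  refine le_trans ?_ (sum_le_sum_prod_of_nonneg (fun p => by positivity) hw.2)
  refine sum_le_sum fun i _ => ?_
  rw [div_eq_mul_inv, abs_mul, mul_comm]
  gcongr
  exact le_add_of_nonneg_right (abs_nonneg _)

end Likelihood

theorem lemma1_uniform_partial_sum_slln_general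
    {NI NW m0 m : ℕ} (Cd Cu : ℝ) (hCd : 0 < Cd)
    (epsnu : ℝ)
    (R0 : Fin NI → Fin m0)
    (μ0 : Fin m0 × Fin NW → ℝ) (hA1 : ∀ p, μ0 p ∈ Set.Icc Cd Cu)
    (R : Fin NI → Fin m)
    {Ω : Type*} [MeasurableSpace Ω] (Pr : Measure Ω)
    (X : ℕ → Ω → Fin NI × Fin NW → ℕ)
    (hmeas : ∀ t p, Measurable fun ω => X t ω p)
    (hindep : iIndepFun
      (fun (q : ℕ × (Fin NI × Fin NW)) ω => X q.1 ω q.2) Pr)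
    (hlaw : ∀ t p, Measure.map (fun ω => X t ω p) Pr
      = poissonMeasure (μ0 (R0 p.1, p.2)).toNNReal) :
    ∀ᵐ ω ∂Pr,
      (Tendsto (fun n : ℕ => ⨆ (q : AdmPair epsnu) (μ : Theta Cd Cu m NW),
          |(1 / (n : ℝ)) * ∑ t ∈ Finset.Ioc ⌊(n : ℝ) * q.1.1⌋₊ ⌊(n : ℝ) * q.1.2⌋₊,
              loglik R μ.1 (X t ω)
            - (q.1.2 - q.1.1) * expLoglik R0 μ0 R μ.1|) atTop (𝓝 0)) ∧
      (Tendsto (fun n : ℕ => ⨆ (q : AdmPair epsnu) (μ : Theta Cd Cu m NW),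
          ‖(1 / (n : ℝ)) • ∑ t ∈ Finset.Ioc ⌊(n : ℝ) * q.1.1⌋₊ ⌊(n : ℝ) * q.1.2⌋₊,
              loglikGrad R μ.1 (X t ω)
            - (q.1.2 - q.1.1) • expLoglikGrad R0 μ0 R μ.1‖) atTop (𝓝 0)) ∧
      (Tendsto (fun n : ℕ => ⨆ (q : AdmPair epsnu) (μ : Theta Cd Cu m NW),
          ‖(1 / (n : ℝ)) • ∑ t ∈ Finset.Ioc ⌊(n : ℝ) * q.1.1⌋₊ ⌊(n : ℝ) * q.1.2⌋₊,
              loglikHess R μ.1 (X t ω)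
            - (q.1.2 - q.1.1) • expLoglikHess R0 μ0 R μ.1‖) atTop (𝓝 0)) := by
  have hslln : ∀ᵐ ω ∂Pr, ∀ p : Fin NI × Fin NW, Tendsto
      (fun n : ℕ => (∑ t ∈ range n, (X t ω p : ℝ)) / n) atTop (𝓝 (μ0 (R0 p.1, p.2))) := by
    refine ae_all_iff.2 fun p => ?_
    rw [← Real.coe_toNNReal _ (hCd.le.trans (hA1 _).1)]
    refine ae_tendsto_average_of_poisson (hmeas · p) (fun i j hij => ?_) (hlaw · p)
    exact hindep.indepFun (i := (i, p)) (j := (j, p)) fun h => hij (congrArg Prod.fst h)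
  filter_upwards [hslln] with ω hω
  have hdev : TendstoUniformly (fun (n : ℕ) (q : AdmPair epsnu) =>
      windowDeviation (1 / n) (q.1.2 - q.1.1) (Ioc ⌊n * q.1.1⌋₊ ⌊n * q.1.2⌋₊)
        (fun t => X t ω) (fun p => μ0 (R0 p.1, p.2))) 0 atTop :=
    tendstoUniformlyOn_univ.1 <| ((tendstoUniformlyOn_windowDeviation hω).comp Subtype.val).mono
      fun q _ => ⟨q.2.1, q.2.2.1.le, q.2.2.2.1⟩
  exact ⟨tendsto_iSup_iSup_of_le_mul hdev _ (fun _ _ _ => abs_nonneg _)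
      fun _ _ μ => abs_mul_sum_loglik_sub_le hCd μ.2,
    tendsto_iSup_iSup_of_le_mul hdev _ (fun _ _ _ => norm_nonneg _)
      fun _ _ μ => norm_smul_sum_loglikGrad_sub_le hCd μ.2,
    tendsto_iSup_iSup_of_le_mul hdev _ (fun _ _ _ => norm_nonneg _)
      fun _ _ μ => norm_smul_sum_loglikHess_sub_le hCd μ.2⟩

/-- Lemma 1: almost surely, uniformly over all admissible pairs `(ν_d, ν_u)` and
all `μ ∈ Θ(R)`, the partial-sum log-likelihood
`(1/n)·Σ_{t=⌊n ν_d⌋+1}^{⌊n ν_u⌋} l((R,μ); X_t)` converges to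
`(ν_u − ν_d)·L(R,μ)`; likewise for the gradients and Hessians in `μ`. -/
theorem lemma1_uniform_partial_sum_slln
    {NI NW m0 m : ℕ} (Cd Cu : ℝ) (hCd : 0 < Cd) (hCdCu : Cd ≤ Cu)
    (epsnu : ℝ) (hepsnu : 0 < epsnu ∧ epsnu < 1)
    (R0 : Fin NI → Fin m0) (hR0surj : ∀ h, ∃ i, R0 i = h)
    (μ0 : Fin m0 × Fin NW → ℝ) (hA1 : ∀ p, μ0 p ∈ Set.Icc Cd Cu)
    (R : Fin NI → Fin m)
    {Ω : Type*} [MeasurableSpace Ω] (Pr : Measure Ω) [IsProbabilityMeasure Pr]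
    (X : ℕ → Ω → Fin NI × Fin NW → ℕ)
    (hmeas : ∀ t p, Measurable fun ω => X t ω p)
    (hindep : iIndepFun
      (fun (q : ℕ × (Fin NI × Fin NW)) ω => X q.1 ω q.2) Pr)
    (hlaw : ∀ t p, Measure.map (fun ω => X t ω p) Pr
      = poissonMeasure (μ0 (R0 p.1, p.2)).toNNReal) :
    ∀ᵐ ω ∂Pr,
      (Tendsto (fun n : ℕ => ⨆ (q : AdmPair epsnu) (μ : Theta Cd Cu m NW),
          |(1 / (n : ℝ)) * ∑ t ∈ Finset.Ioc ⌊(n : ℝ) * q.1.1⌋₊ ⌊(n : ℝ) * q.1.2⌋₊,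
              loglik R μ.1 (X t ω)
            - (q.1.2 - q.1.1) * expLoglik R0 μ0 R μ.1|) atTop (𝓝 0)) ∧
      (Tendsto (fun n : ℕ => ⨆ (q : AdmPair epsnu) (μ : Theta Cd Cu m NW),
          ‖(1 / (n : ℝ)) • ∑ t ∈ Finset.Ioc ⌊(n : ℝ) * q.1.1⌋₊ ⌊(n : ℝ) * q.1.2⌋₊,
              loglikGrad R μ.1 (X t ω)
            - (q.1.2 - q.1.1) • expLoglikGrad R0 μ0 R μ.1‖) atTop (𝓝 0)) ∧
      (Tendsto (fun n : ℕ => ⨆ (q : AdmPair epsnu) (μ : Theta Cd Cu m NW),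
          ‖(1 / (n : ℝ)) • ∑ t ∈ Finset.Ioc ⌊(n : ℝ) * q.1.1⌋₊ ⌊(n : ℝ) * q.1.2⌋₊,
              loglikHess R μ.1 (X t ω)
            - (q.1.2 - q.1.1) • expLoglikHess R0 μ0 R μ.1‖) atTop (𝓝 0)) :=
  lemma1_uniform_partial_sum_slln_general Cd Cu hCd epsnu R0 μ0 hA1 R Pr X hmeas hindep hlaw
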